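/- arXiv:2312.11183 — 4 statements merged into one kernel-verified Lean document; each statement's English description precedes it below -/
import Mathlib

section
/- For each fixed nonnegative integer k, the number N(k,n) of permutations of {1,...,n} with exactly k descents satisfies N(k,n) = (k+1)^n (1 + o(1)) as n → ∞; equivalently N(k,n)/(k+1)^n tends to 1. -/
/-!
Stable sorting `f ↦ Tuple.sort f` sends a word `f : Fin n → Fin (k + 1)` to a permutation `σ`
along which `f` is weakly increasing, and strictly increasing across every descent of `σ`, since
ties keep their order. Hence `σ` has at most `k` descents, and if it has exactly `k`, then
`f (σ i)` is forced to be the number of descents of `σ` before position `i`; conversely, that word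
sorts to `σ`. So `(k + 1) ^ n = N(k, n) + #{f | sort f has fewer than k descents}`. A word of the
second kind is determined by `σ = sort f`, with at most `k ^ n` choices by the same argument, and
by the monotone word `f ∘ σ`, with at most `(n + 1) ^ (k + 1)` choices; and
`k ^ n (n + 1) ^ (k + 1) = o((k + 1) ^ n)`.
-/

open Filter

/-- Number of descents of a permutation of `Fin n`: indices `i` with `σ(i) > σ(i+1)`. -/
def descentNum {n : ℕ} (σ : Equiv.Perm (Fin n)) : ℕ :=
  (Finset.univ.filter (fun p : Fin n × Fin n =>
    (p.2 : ℕ) = (p.1 : ℕ) + 1 ∧ σ p.2 < σ p.1)).card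

/-- Number of permutations of `{1,…,n}` with exactly `k` descents. -/
def eulerianNum (k n : ℕ) : ℕ :=
  (Finset.univ.filter (fun σ : Equiv.Perm (Fin n) => descentNum σ = k)).card

open Finset hiding sort
open Equiv Tuple Topology

variable {n : ℕ}

def IsDescentAt (σ : Perm (Fin n)) (i : ℕ) : Prop :=
  ∃ h : i + 1 < n, σ ⟨i + 1, h⟩ < σ ⟨i, by omega⟩

instance (σ : Perm (Fin n)) : DecidablePred (IsDescentAt σ) :=
  fun _ => inferInstanceAs (Decidable (∃ _, _))

def descentsBelow (σ : Perm (Fin n)) (m : ℕ) : ℕ :=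
  #{i ∈ range m | IsDescentAt σ i}

section descentsBelow

variable (σ : Perm (Fin n))

@[simp]
theorem descentsBelow_zero : descentsBelow σ 0 = 0 := rfl

theorem descentsBelow_succ (m : ℕ) :
    descentsBelow σ (m + 1) = descentsBelow σ m + if IsDescentAt σ m then 1 else 0 := by
  rw [descentsBelow, range_add_one, filter_insert]
  split_ifs
  · exact card_insert_of_notMem (by simp)
  · rfl

theorem descentsBelow_mono : Monotone (descentsBelow σ) :=
  fun _ _ h => card_le_card (filter_subset_filter _ (range_subset_range.2 h))

theorem descentNum_eq_descentsBelow : descentNum σ = descentsBelow σ (n - 1) := by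
  refine card_nbij (fun p => p.1) ?_ ?_ ?_
  · rintro ⟨i, j⟩ hp
    simp only [coe_filter, mem_univ, true_and, Set.mem_ofPred_eq] at hp
    obtain ⟨hij, hd⟩ := hp
    simp only [coe_filter, mem_range, Set.mem_ofPred_eq]
    have hj := j.isLt
    refine ⟨by omega, by omega, ?_⟩
    convert hd using 3; omega
  · rintro ⟨i, j⟩ hp ⟨i', j'⟩ hp' (h : i.val = i'.val)
    simp only [coe_filter, mem_univ, true_and, Set.mem_ofPred_eq] at hp hp'
    ext <;> simp only at h ⊢ <;> omega
  · rintro i hi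
    simp only [coe_filter, mem_range, Set.mem_ofPred_eq] at hi
    obtain ⟨-, h, hd⟩ := hi
    exact ⟨(⟨i, by omega⟩, ⟨i + 1, h⟩), by simpa using hd, rfl⟩

theorem descentsBelow_le_descentNum {m : ℕ} (hm : m < n) : descentsBelow σ m ≤ descentNum σ :=
  descentNum_eq_descentsBelow σ ▸ descentsBelow_mono σ (by omega)

variable {σ}

theorem add_descentsBelow_le {s : Fin n → ℕ} (hs : Monotone s)
    (hdesc : ∀ i j : Fin n, (j : ℕ) = i + 1 → σ j < σ i → s i < s j) {i j : Fin n} (hij : i ≤ j) :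
    s i + descentsBelow σ j ≤ s j + descentsBelow σ i := by
  obtain ⟨j, hj⟩ := j
  change (i : ℕ) ≤ j at hij
  induction j, hij using Nat.le_induction with
  | base => rfl
  | succ m him ih =>
    have ih : s i + descentsBelow σ m ≤ s ⟨m, _⟩ + descentsBelow σ i := ih (by omega)
    rw [descentsBelow_succ]
    split_ifs with hd
    · have := hdesc ⟨m, by omega⟩ ⟨m + 1, hj⟩ rfl hd.2
      omega
    · have := hs (show (⟨m, by omega⟩ : Fin n) ≤ ⟨m + 1, hj⟩ from Nat.le_succ m)
      omega

theorem lt_of_not_isDescentAt {m : ℕ} (h : m + 1 < n) (hd : ¬ IsDescentAt σ m) :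
    σ ⟨m, by omega⟩ < σ ⟨m + 1, h⟩ :=
  (not_lt.1 fun h' => hd ⟨h, h'⟩).lt_of_ne (σ.injective.ne (by simp [Fin.ext_iff]))

theorem lt_of_descentsBelow_eq {i j : Fin n} (hij : i < j)
    (h : descentsBelow σ i = descentsBelow σ j) : σ i < σ j := by
  obtain ⟨j, hj⟩ := j
  change (i : ℕ) + 1 ≤ j at hij
  induction j, hij using Nat.le_induction with
  | base =>
    rw [descentsBelow_succ] at h
    exact lt_of_not_isDescentAt hj (by simpa using h)
  | succ m him ih =>
    have hDm := descentsBelow_mono σ (show (i : ℕ) ≤ m by omega)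
    rw [descentsBelow_succ] at h
    have hd : ¬ IsDescentAt σ m := fun hd => by rw [if_pos hd] at h; omega
    rw [if_neg hd, add_zero] at h
    exact (ih (by omega) h).trans (lt_of_not_isDescentAt hj hd)

end descentsBelow

def descentRank (σ : Perm (Fin n)) (x : Fin n) : ℕ :=
  descentsBelow σ (σ.symm x)

theorem descentRank_le_descentNum (σ : Perm (Fin n)) (x : Fin n) :
    descentRank σ x ≤ descentNum σ :=
  descentsBelow_le_descentNum σ (σ.symm x).isLt

theorem sort_descentRank (σ : Perm (Fin n)) : sort (descentRank σ) = σ := by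
  refine (eq_sort_iff.2 ⟨?_, fun i j hij h => ?_⟩).symm
  · exact fun i j hij => by simpa [descentRank] using descentsBelow_mono σ hij
  · exact lt_of_descentsBelow_eq hij (by simpa [descentRank] using h)

section sort

variable {α β : Type*} [LinearOrder α] [LinearOrder β]

theorem sort_comp_of_strictMono {g : α → β} (hg : StrictMono g) (f : Fin n → α) :
    sort (g ∘ f) = sort f :=
  (eq_sort_iff.2 ⟨hg.monotone.comp (monotone_sort f), fun i j hij h =>
    (eq_sort_iff.1 rfl).2 i j hij (hg.injective h)⟩).symm

theorem lt_of_sort_lt_sort (f : Fin n → α) {i j : Fin n} (hij : i < j)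
    (h : sort f j < sort f i) : f (sort f i) < f (sort f j) :=
  (monotone_sort f hij.le).lt_of_ne fun he => (eq_sort_iff.1 rfl).2 i j hij he |>.asymm h

theorem add_descentsBelow_sort_le (f : Fin n → ℕ) {i j : Fin n} (hij : i ≤ j) :
    f (sort f i) + descentsBelow (sort f) j ≤ f (sort f j) + descentsBelow (sort f) i :=
  add_descentsBelow_le (monotone_sort f)
    (fun i j hj => lt_of_sort_lt_sort f (by rw [Fin.lt_def]; omega)) hij

theorem descentNum_sort_le {k : ℕ} {f : Fin n → ℕ} (hf : ∀ x, f x ≤ k) :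
    descentNum (sort f) ≤ k := by
  cases n with
  | zero => simp [descentNum]
  | succ m =>
    have h := add_descentsBelow_sort_le f (Fin.zero_le (Fin.last m))
    simp only [Fin.val_zero, descentsBelow_zero, Fin.val_last] at h
    rw [descentNum_eq_descentsBelow, Nat.add_sub_cancel]
    have := hf (sort f (Fin.last m))
    omega

theorem descentRank_sort {k : ℕ} {f : Fin n → ℕ} (hf : ∀ x, f x ≤ k)
    (hd : descentNum (sort f) = k) : descentRank (sort f) = f := by
  cases n with
  | zero => exact funext fun x => x.elim0
  | succ m =>
    rw [descentNum_eq_descentsBelow, Nat.add_sub_cancel] at hd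
    funext x
    obtain ⟨i, rfl⟩ := (sort f).surjective x
    have h₀ := add_descentsBelow_sort_le f (Fin.zero_le i)
    have h₁ := add_descentsBelow_sort_le f (Fin.le_last i)
    simp only [Fin.val_zero, descentsBelow_zero, Fin.val_last] at h₀ h₁
    have := hf (sort f (Fin.last m))
    simp only [descentRank, symm_apply_apply]
    omega

end sort

theorem sort_val_comp {m : ℕ} (f : Fin n → Fin m) : sort (Fin.val ∘ f) = sort f :=
  sort_comp_of_strictMono Fin.val_strictMono f

theorem exists_sort_eq {σ : Perm (Fin n)} {m : ℕ} (h : descentNum σ < m) :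
    ∃ g : Fin n → Fin m, sort g = σ :=
  ⟨fun x => ⟨descentRank σ x, (descentRank_le_descentNum σ x).trans_lt h⟩, by
    rw [← sort_val_comp]; exact sort_descentRank σ⟩

theorem injOn_sort (k : ℕ) :
    Set.InjOn sort {f : Fin n → Fin (k + 1) | descentNum (sort f) = k} := by
  have hval (f : Fin n → Fin (k + 1)) (hf : descentNum (sort f) = k) :
      Fin.val ∘ f = descentRank (sort f) := by
    rw [← sort_val_comp] at hf ⊢
    exact (descentRank_sort (fun x => Fin.is_le (f x)) hf).symm
  intro f₁ h₁ f₂ h₂ h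
  exact Fin.val_injective.comp_left ((hval f₁ h₁).trans (h ▸ (hval f₂ h₂).symm))

theorem eulerianNum_eq_card_sort (k n : ℕ) :
    eulerianNum k n = #{f : Fin n → Fin (k + 1) | descentNum (sort f) = k} := by
  refine (card_nbij sort (fun f hf => by simpa using hf) (by simpa using injOn_sort k) ?_).symm
  intro σ hσ
  obtain ⟨g, hg⟩ := exists_sort_eq (σ := σ) (m := k + 1) (Nat.lt_succ_of_le (mem_filter.1 hσ).2.le)
  exact ⟨g, by simpa [hg] using hσ, hg⟩

theorem card_descentNum_lt_le (k n : ℕ) : #{σ : Perm (Fin n) | descentNum σ < k} ≤ k ^ n :=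
  calc #{σ : Perm (Fin n) | descentNum σ < k}
      ≤ #((univ : Finset (Fin n → Fin k)).image sort) :=
        card_le_card fun σ hσ => by simpa using exists_sort_eq (mem_filter.1 hσ).2
    _ ≤ k ^ n := card_image_le.trans (by simp)

-- A monotone tuple is determined by the sizes of its sublevel sets.
theorem card_monotone_le (α : Type*) [Fintype α] [LinearOrder α] :
    #{g : Fin n → α | Monotone g} ≤ (n + 1) ^ Fintype.card α := by
  calc #{g : Fin n → α | Monotone g} ≤ #(univ : Finset (α → Fin (n + 1))) :=
        card_le_card_of_injOn
          (fun g a => ⟨#{i | g i ≤ a}, Nat.lt_succ_of_le (card_le_univ _ |>.trans_eq (by simp))⟩)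
          (by simp) ?_
    _ = (n + 1) ^ Fintype.card α := by simp
  intro g₁ h₁ g₂ h₂ h
  simp only [coe_filter, mem_univ, true_and, Set.mem_ofPred_eq] at h₁ h₂
  have hle (i : Fin n) (a : α) : g₁ i ≤ a ↔ g₂ i ≤ a := by
    rw [← lt_card_le_iff_apply_le_of_monotone h₁, ← lt_card_le_iff_apply_le_of_monotone h₂]
    have := congrFun h a
    simp only [Fin.mk.injEq] at this
    rw [this]
  exact funext fun i => le_antisymm ((hle i _).2 le_rfl) ((hle i _).1 le_rfl)

theorem card_descentNum_sort_ne_le (k n : ℕ) :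
    #{f : Fin n → Fin (k + 1) | descentNum (sort f) ≠ k} ≤ k ^ n * (n + 1) ^ (k + 1) := by
  calc #{f : Fin n → Fin (k + 1) | descentNum (sort f) ≠ k}
      ≤ #(({σ : Perm (Fin n) | descentNum σ < k} : Finset _) ×ˢ
          ({g : Fin n → Fin (k + 1) | Monotone g} : Finset _)) :=
        card_le_card_of_injOn (fun f => (sort f, f ∘ sort f)) ?_ ?_
    _ ≤ k ^ n * (n + 1) ^ (k + 1) := by
        rw [card_product]
        gcongr
        · exact card_descentNum_lt_le k n
        · simpa using card_monotone_le (n := n) (Fin (k + 1))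
  · intro f hf
    simp only [coe_filter, mem_univ, true_and, Set.mem_ofPred_eq] at hf
    simp only [coe_product, coe_filter, mem_univ, true_and, Set.mem_prod, Set.mem_ofPred_eq]
    have hle : descentNum (sort f) ≤ k := by
      rw [← sort_val_comp]
      exact descentNum_sort_le fun x => Fin.is_le (f x)
    exact ⟨hle.lt_of_ne hf, monotone_sort f⟩
  · intro f₁ _ f₂ _ h
    simp only [Prod.mk.injEq] at h
    obtain ⟨hσ, hg⟩ := h
    rw [hσ] at hg
    exact (sort f₂).surjective.injective_comp_right hg

theorem eulerianNum_add_card_descentNum_sort_ne (k n : ℕ) :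
    eulerianNum k n + #{f : Fin n → Fin (k + 1) | descentNum (sort f) ≠ k} = (k + 1) ^ n := by
  rw [eulerianNum_eq_card_sort, card_filter_add_card_filter_not]
  simp

theorem eulerianNum_le_pow (k n : ℕ) : eulerianNum k n ≤ (k + 1) ^ n :=
  Nat.le.intro (eulerianNum_add_card_descentNum_sort_ne k n)

theorem pow_le_eulerianNum_add (k n : ℕ) :
    (k + 1) ^ n ≤ eulerianNum k n + k ^ n * (n + 1) ^ (k + 1) := by
  rw [← eulerianNum_add_card_descentNum_sort_ne k n]
  gcongr
  exact card_descentNum_sort_ne_le k n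

theorem tendsto_add_one_pow_mul_pow_of_abs_lt_one (j : ℕ) {r : ℝ} (hr : |r| < 1) :
    Tendsto (fun n : ℕ => ((n : ℝ) + 1) ^ j * r ^ n) atTop (𝓝 0) := by
  have hexp (n : ℕ) : ((n : ℝ) + 1) ^ j * r ^ n =
      ∑ i ∈ range (j + 1), (j.choose i : ℝ) * ((n : ℝ) ^ i * r ^ n) := by
    rw [add_pow, sum_mul]
    refine sum_congr rfl fun i _ => ?_
    ring
  simp only [hexp]
  simpa using tendsto_finsetSum _ fun i _ =>
    (tendsto_pow_const_mul_const_pow_of_abs_lt_one i hr).const_mul (j.choose i : ℝ)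

/-- For each fixed `k`, `N(k,n) = (k+1)^n (1+o(1))` as `n → ∞`. -/
theorem eulerian_asymp (k : ℕ) :
    Tendsto (fun n : ℕ => (eulerianNum k n : ℝ) / (k + 1) ^ n) atTop (nhds 1) := by
  have hr : |(k : ℝ) / (k + 1)| < 1 := by
    rw [abs_of_nonneg (by positivity), div_lt_one (by positivity)]
    linarith
  have herr := tendsto_add_one_pow_mul_pow_of_abs_lt_one (k + 1) hr
  refine tendsto_of_tendsto_of_tendsto_of_le_of_le (by simpa using tendsto_const_nhds.sub herr)
    tendsto_const_nhds (fun n => ?_) (fun n => ?_)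
  · have h : ((k + 1) ^ n : ℝ) ≤ eulerianNum k n + k ^ n * (n + 1) ^ (k + 1) := by
      exact_mod_cast pow_le_eulerianNum_add k n
    rw [div_pow, mul_div_assoc', sub_le_iff_le_add, ← add_div, le_div_iff₀ (by positivity)]
    linarith
  · dsimp only
    rw [div_le_one (by positivity)]
    exact_mod_cast eulerianNum_le_pow k n
end

section
/- For any permutation τ ∈ S_n with exactly k descents, the probability that the random permutation D_n^k equals τ is (k+1)^{-n}, where D_n^k is constructed from n i.i.d. uniform random variables A_1,...,A_n on {1,...,k+1} by concatenating, in order i = 1,...,k+1, the increasingly sorted lists of indices j with A_j = i. In particular, conditioned on having exactly k descents, D_n^k is uniform on the set of permutations with k descents. -/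
/-- Given a tuple `a : Fin n → Fin (k+1)`, the permutation `D_n^k` obtained by
concatenating, for `i = 0, …, k` in order, the increasingly sorted lists of indices `j`
with `a j = i`.  This is exactly the permutation sorting the pairs `(a j, j)`
lexicographically, i.e. `Tuple.sort a`. -/
def dPerm {n k : ℕ} (a : Fin n → Fin (k + 1)) : Equiv.Perm (Fin n) :=
  Tuple.sort a

/-
Sorting `a` yields `τ` exactly when `a ∘ τ` is weakly increasing and, since ties are broken by
position, strictly increasing across every descent of `τ`. Such a labelling rises by at least one
at each of the `k` descents while staying in `{0, …, k}`, so it is forced: `a (τ i)` must be the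
number of descents of `τ` before position `i`. Hence every `τ` with `k` descents is produced by
exactly one of the `(k + 1) ^ n` tuples.
-/

open Finset

lemma Fin.eq_of_forall_sub_le_sub_succ {α : Type*} [AddCommGroup α] [PartialOrder α]
    [IsOrderedAddMonoid α] {m : ℕ} {b c : Fin (m + 1) → α}
    (hstep : ∀ i : Fin m, c i.succ - c i.castSucc ≤ b i.succ - b i.castSucc)
    (hzero : c 0 ≤ b 0) (hlast : b (Fin.last m) ≤ c (Fin.last m)) : b = c := by
  have hmono : Monotone (b - c) := Fin.monotone_iff_le_succ.2 fun i => by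
    have h := hstep i
    rw [sub_le_sub_iff] at h
    rw [Pi.sub_apply, Pi.sub_apply, sub_le_sub_iff, add_comm (b _)]
    exact h
  funext j
  have h0 : 0 ≤ b j - c j := (sub_nonneg.2 hzero).trans (hmono (Fin.zero_le j))
  have hl : b j - c j ≤ 0 := (hmono (Fin.le_last j)).trans (sub_nonpos.2 hlast)
  exact sub_eq_zero.1 (le_antisymm hl h0)

namespace Equiv.Perm

variable {m : ℕ} (τ : Perm (Fin (m + 1)))

def descentSet : Finset (Fin m) := {i | τ i.succ < τ i.castSucc}

@[simp]
lemma mem_descentSet {i : Fin m} : i ∈ τ.descentSet ↔ τ i.succ < τ i.castSucc := by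
  simp [descentSet]

def descentsBefore (j : Fin (m + 1)) : ℕ := #{i ∈ τ.descentSet | i.succ ≤ j}

lemma descentNum_eq_card_descentSet : descentNum τ = #τ.descentSet := by
  symm
  refine card_nbij (fun i => (i.castSucc, i.succ)) ?_ ?_ ?_
  · intro i hi
    simpa using hi
  · intro i _ j _ h
    simpa using congrArg Prod.fst h
  · rintro ⟨p, q⟩ hpq
    obtain ⟨hq, hdesc⟩ : (q : ℕ) = p + 1 ∧ τ q < τ p := by simpa using hpq
    have hp : (p : ℕ) < m := by omega
    obtain rfl : q = Fin.succ ⟨p, hp⟩ := Fin.ext hq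
    exact ⟨⟨p, hp⟩, by simpa using hdesc, rfl⟩

lemma descentsBefore_zero : τ.descentsBefore 0 = 0 := by
  simp [descentsBefore]

lemma descentsBefore_last : τ.descentsBefore (Fin.last m) = descentNum τ := by
  simp [descentsBefore, descentNum_eq_card_descentSet, Fin.le_last]

lemma descentsBefore_succ (i : Fin m) :
    τ.descentsBefore i.succ =
      τ.descentsBefore i.castSucc + if i ∈ τ.descentSet then 1 else 0 := by
  simp only [descentsBefore, Fin.succ_le_succ_iff, Fin.succ_le_castSucc_iff]
  simp only [le_iff_lt_or_eq, filter_or]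
  rw [card_union_of_disjoint (disjoint_filter.2 fun j _ hj => hj.ne), filter_eq']
  split_ifs <;> simp

lemma descentsBefore_monotone : Monotone τ.descentsBefore :=
  Fin.monotone_iff_le_succ.2 fun i => by rw [descentsBefore_succ]; omega

lemma lt_of_lt_of_descentsBefore_eq {i j : Fin (m + 1)} (hij : i < j)
    (h : τ.descentsBefore i = τ.descentsBefore j) : τ i < τ j := by
  induction j using Fin.induction with
  | zero => exact absurd hij (Fin.not_lt_zero i)
  | succ l ih =>
    have hil : i ≤ l.castSucc := Fin.le_castSucc_iff.2 hij
    have hmid := τ.descentsBefore_monotone hil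
    have hstep := τ.descentsBefore_succ l
    have hasc : l ∉ τ.descentSet := fun hl => by simp only [hl, if_true] at hstep; omega
    have hlt : τ l.castSucc < τ l.succ := by
      rw [mem_descentSet, not_lt] at hasc
      exact hasc.lt_of_ne (τ.injective.ne (Fin.castSucc_lt_succ (i := l)).ne)
    rcases hil.eq_or_lt with rfl | hil
    · exact hlt
    · exact (ih hil (by simp only [hasc, if_false] at hstep; omega)).trans hlt

end Equiv.Perm

lemma dPerm_eq_iff {m k : ℕ} {τ : Equiv.Perm (Fin (m + 1))} (hτ : descentNum τ = k)
    (a : Fin (m + 1) → Fin (k + 1)) :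
    dPerm a = τ ↔ ∀ i, (a (τ i) : ℕ) = τ.descentsBefore i := by
  rw [dPerm, eq_comm, Tuple.eq_sort_iff]
  constructor
  · rintro ⟨hmono, htie⟩
    have hstep (i : Fin m) : (τ.descentsBefore i.succ : ℤ) - τ.descentsBefore i.castSucc ≤
        ((a (τ i.succ) : ℕ) : ℤ) - ((a (τ i.castSucc) : ℕ) : ℤ) := by
      have hle : a (τ i.castSucc) ≤ a (τ i.succ) := hmono (Fin.castSucc_le_succ i)
      rw [τ.descentsBefore_succ]
      split_ifs with hdesc
      · have hne : a (τ i.castSucc) ≠ a (τ i.succ) := fun h =>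
          (htie _ _ Fin.castSucc_lt_succ h).not_gt (τ.mem_descentSet.1 hdesc)
        have := Fin.lt_def.1 (hle.lt_of_ne hne)
        push_cast
        omega
      · have := Fin.le_def.1 hle
        push_cast
        omega
    have hzero : (τ.descentsBefore 0 : ℤ) ≤ ((a (τ 0) : ℕ) : ℤ) := by
      simp [τ.descentsBefore_zero]
    have hlast : ((a (τ (Fin.last m)) : ℕ) : ℤ) ≤ τ.descentsBefore (Fin.last m) := by
      rw [τ.descentsBefore_last, hτ]
      exact_mod_cast Fin.is_le _
    intro i
    exact_mod_cast congrFun (Fin.eq_of_forall_sub_le_sub_succ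
      (b := fun i => ((a (τ i) : ℕ) : ℤ)) (c := fun i => (τ.descentsBefore i : ℤ))
      hstep hzero hlast) i
  · intro ha
    refine ⟨fun i j hij => ?_, fun i j hij he => ?_⟩
    · simp only [Function.comp_apply, Fin.le_def, ha]
      exact τ.descentsBefore_monotone hij
    · exact τ.lt_of_lt_of_descentsBefore_eq hij (by rw [← ha, ← ha, he])

lemma card_filter_dPerm_eq {n k : ℕ} (τ : Equiv.Perm (Fin n)) (hτ : descentNum τ = k) :
    #{a : Fin n → Fin (k + 1) | dPerm a = τ} = 1 := by
  cases n with
  | zero => simp [Subsingleton.elim _ τ]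
  | succ m =>
    have hbound (j : Fin (m + 1)) : τ.descentsBefore j < k + 1 := by
      have := τ.descentsBefore_monotone (Fin.le_last j)
      rw [τ.descentsBefore_last, hτ] at this
      omega
    rw [card_eq_one]
    refine ⟨fun x => ⟨τ.descentsBefore (τ⁻¹ x), hbound _⟩, ?_⟩
    ext a
    simp only [mem_filter, mem_univ, true_and, mem_singleton, dPerm_eq_iff hτ, funext_iff,
      Fin.ext_iff]
    exact (Equiv.forall_congr_left τ).trans (by simp)

/-- For any permutation `τ` with exactly `k` descents, the probability that `D_n^k = τ`
(under `a` uniform on `{1,…,k+1}^n`) is `(k+1)^{-n}`; in particular, conditioned on having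
exactly `k` descents, `D_n^k` is uniform on the set of permutations with `k` descents. -/
theorem dPerm_uniform (n k : ℕ) (τ : Equiv.Perm (Fin n)) (hτ : descentNum τ = k) :
    (((Finset.univ.filter (fun a : Fin n → Fin (k + 1) => dPerm a = τ)).card : ℝ)
        / ((k + 1 : ℝ) ^ n) = ((k + 1 : ℝ) ^ n)⁻¹) ∧
    (∀ τ' : Equiv.Perm (Fin n), descentNum τ' = k →
      (Finset.univ.filter (fun a : Fin n → Fin (k + 1) => dPerm a = τ)).card =
      (Finset.univ.filter (fun a : Fin n → Fin (k + 1) => dPerm a = τ')).card) := by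
  refine ⟨?_, fun τ' hτ' => ?_⟩
  · rw [card_filter_dPerm_eq τ hτ, Nat.cast_one, one_div]
  · rw [card_filter_dPerm_eq τ hτ, card_filter_dPerm_eq τ' hτ']
end

section
/- For q ∈ (0,1) and n ≥ 0, the coefficient of x^n in the power series expansion of f_0(x) = (1-q)/(e^{(q-1)x} - q) equals ((1-q)^{n+1}/(q·n!)) · Σ_{k≥1} q^k k^n. -/
/-!
Where `u = q e^{(1-q)x} < 1`, the geometric series gives
`f₀(x) = ((1-q)/q) Σ_{k≥0} u^{k+1} = Σ_k ((1-q)/q) q^{k+1} e^{(1-q)(k+1)x}`.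
On a half-line `x < r` with `q e^{(1-q)r} < 1`, every termwise derivative of this exponential
series is dominated by `C (k+1)^m (q e^{(1-q)r})^{k+1}`, so it can be differentiated termwise
`n` times; at `x = 0` this gives `Σ_k ((1-q)/q) q^{k+1} ((1-q)(k+1))^n`.
-/

open Filter Set Real

section ExpSeries

variable {c μ : ℕ → ℝ} {r : ℝ}

theorem hasDerivAt_tsum_mul_exp (hμ : ∀ k, 0 ≤ μ k)
    (hsum : ∀ m, Summable fun k ↦ |c k| * μ k ^ m * exp (μ k * r)) (n : ℕ) {x : ℝ} (hx : x < r) :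
    HasDerivAt (fun y ↦ ∑' k, c k * μ k ^ n * exp (μ k * y))
      (∑' k, c k * μ k ^ (n + 1) * exp (μ k * x)) x := by
  have hbound : ∀ m k, ∀ y ∈ Iio r,
      ‖c k * μ k ^ m * exp (μ k * y)‖ ≤ |c k| * μ k ^ m * exp (μ k * r) := fun m k y hy ↦ by
    rw [norm_mul, norm_mul, norm_of_nonneg (pow_nonneg (hμ k) m), norm_of_nonneg (exp_pos _).le]
    exact mul_le_mul_of_nonneg_left (exp_le_exp.2 (mul_le_mul_of_nonneg_left hy.out.le (hμ k)))
      (mul_nonneg (abs_nonneg _) (pow_nonneg (hμ k) m))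
  refine hasDerivAt_tsum_of_isPreconnected (hsum (n + 1)) isOpen_Iio isPreconnected_Iio
    (fun k y _ ↦ ?_) (hbound (n + 1)) hx ((hsum n).of_norm_bounded fun k ↦ hbound n k x hx) hx
  exact ((hasDerivAt_const_mul (μ k)).exp.const_mul (c k * μ k ^ n)).congr_deriv (by ring)

theorem iteratedDeriv_tsum_mul_exp (hμ : ∀ k, 0 ≤ μ k)
    (hsum : ∀ m, Summable fun k ↦ |c k| * μ k ^ m * exp (μ k * r)) (n : ℕ) {x : ℝ} (hx : x < r) :
    iteratedDeriv n (fun y ↦ ∑' k, c k * exp (μ k * y)) x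
      = ∑' k, c k * μ k ^ n * exp (μ k * x) := by
  induction n generalizing x with
  | zero => simp
  | succ n ih =>
    have hloc : iteratedDeriv n (fun y ↦ ∑' k, c k * exp (μ k * y))
        =ᶠ[nhds x] fun y ↦ ∑' k, c k * μ k ^ n * exp (μ k * y) :=
      eventually_of_mem (Iio_mem_nhds hx) fun y hy ↦ ih hy
    rw [iteratedDeriv_succ, hloc.deriv_eq, (hasDerivAt_tsum_mul_exp hμ hsum n hx).deriv]

end ExpSeries

theorem summable_abs_mul_pow_mul_exp {q r : ℝ} (a b : ℝ) (hq : 0 ≤ q)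
    (hr : q * exp (b * r) < 1) (m : ℕ) :
    Summable fun k : ℕ ↦
      |a * q ^ (k + 1)| * (b * ((k : ℝ) + 1)) ^ m * exp (b * ((k : ℝ) + 1) * r) := by
  have hgeom : Summable fun k : ℕ ↦ ((k + 1 : ℕ) : ℝ) ^ m * (q * exp (b * r)) ^ (k + 1) :=
    (summable_nat_add_iff (f := fun k : ℕ ↦ (k : ℝ) ^ m * (q * exp (b * r)) ^ k) 1).2 <|
      summable_pow_mul_geometric_of_norm_lt_one m <| by rwa [norm_of_nonneg (by positivity)]
  refine (hgeom.mul_left (|a| * b ^ m)).congr fun k ↦ ?_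
  rw [abs_mul, abs_of_nonneg (pow_nonneg hq _), mul_pow, mul_pow, ← exp_nat_mul]
  push_cast
  ring_nf

theorem div_exp_sub_eq_tsum {q x : ℝ} (hq : 0 < q) (hx : q * exp ((1 - q) * x) < 1) :
    (1 - q) / (exp ((q - 1) * x) - q)
      = ∑' k : ℕ, (1 - q) / q * q ^ (k + 1) * exp ((1 - q) * ((k : ℝ) + 1) * x) := by
  set u := q * exp ((1 - q) * x)
  have hterm : ∀ k : ℕ, (1 - q) / q * q ^ (k + 1) * exp ((1 - q) * ((k : ℝ) + 1) * x)
      = (1 - q) / q * u * u ^ k := fun k ↦ by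
    rw [mul_assoc _ u, ← pow_succ', mul_pow, ← exp_nat_mul]
    push_cast
    ring_nf
  have hu : exp ((q - 1) * x) = q / u := by
    rw [div_mul_cancel_left₀ hq.ne', ← exp_neg]
    ring_nf
  have hu0 : 0 < u := by positivity
  rw [tsum_congr hterm, tsum_mul_left, tsum_geometric_of_lt_one hu0.le hx, hu]
  field_simp

/-- For `q ∈ (0,1)`, the `n`-th Taylor coefficient at `0` of
`f₀(x) = (1-q)/(e^{(q-1)x} - q)` equals `((1-q)^{n+1}/(q·n!)) · Σ_{k ≥ 1} q^k k^n`. -/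
theorem coeff_f0 (q : ℝ) (hq0 : 0 < q) (hq1 : q < 1) (n : ℕ) :
    iteratedDeriv n (fun x : ℝ => (1 - q) / (Real.exp ((q - 1) * x) - q)) 0
        / (n.factorial : ℝ)
      = (1 - q) ^ (n + 1) / (q * (n.factorial : ℝ))
          * ∑' k : ℕ, q ^ (k + 1) * ((k + 1 : ℝ)) ^ n := by
  have h1q : 0 ≤ 1 - q := sub_nonneg.2 hq1.le
  obtain ⟨r, hr, hr0⟩ : ∃ r, q * exp ((1 - q) * r) < 1 ∧ 0 < r := by
    have h : ∀ᶠ r in nhds 0, q * exp ((1 - q) * r) < 1 :=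
      (by fun_prop : Continuous fun r ↦ q * exp ((1 - q) * r)).continuousAt.eventually_lt
        continuousAt_const (by simpa using hq1)
    exact ((h.filter_mono (nhdsWithin_le_nhds (s := Ioi 0))).and self_mem_nhdsWithin).exists
  have hexpand : (fun x : ℝ ↦ (1 - q) / (exp ((q - 1) * x) - q))
      =ᶠ[nhds 0]
        fun x ↦ ∑' k : ℕ, (1 - q) / q * q ^ (k + 1) * exp ((1 - q) * ((k : ℝ) + 1) * x) :=
    eventually_of_mem (Iio_mem_nhds hr0) fun x hx ↦ div_exp_sub_eq_tsum hq0 <|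
      (mul_le_mul_of_nonneg_left (exp_le_exp.2 (mul_le_mul_of_nonneg_left hx.out.le h1q))
        hq0.le).trans_lt hr
  rw [hexpand.iteratedDeriv_eq, iteratedDeriv_tsum_mul_exp (r := r)
    (fun k ↦ mul_nonneg h1q (by positivity)) (summable_abs_mul_pow_mul_exp _ _ hq0.le hr) n hr0,
    ← tsum_div_const, ← tsum_mul_left]
  refine tsum_congr fun k ↦ ?_
  rw [mul_zero, exp_zero, mul_one, mul_pow]
  field_simp
  ring
end

section
/- Let q ∈ (0,1) and A = A(x,q) be implicitly defined near x=0 by x = (e^{-qA} − e^{-A})/(1−q) with A(0,q)=0. Then the generating function B(x,q) = (e^{2qA} + ((1−q)^2 A − q − 1) e^{(1+q)A} + q e^{2A}) / (e^{qA} − q e^{A})^2 satisfies the linear ODE ∂_x B − (1+q+2qx A_x) A_x B = x (1+q+2qx A_x) A_x^2, where A_x = ∂A/∂x, and B(0,q)=0. -/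
/-- The path-length generating function expressed in terms of `A = A(x,q)`:
`B = (e^{2qA} + ((1−q)²A − q − 1)e^{(1+q)A} + q e^{2A}) / (e^{qA} − q e^{A})²`. -/
noncomputable def Bfun (q : ℝ) (A : ℝ → ℝ) : ℝ → ℝ := fun x =>
  (Real.exp (2 * q * A x) + ((1 - q) ^ 2 * A x - q - 1) * Real.exp ((1 + q) * A x)
      + q * Real.exp (2 * A x))
    / (Real.exp (q * A x) - q * Real.exp (A x)) ^ 2

/-!
Everything is a function of `a = A(x)`: with `u = e^a`, `v = e^{qa}` the implicit equation
reads `x = (1/v − 1/u)/(1−q)`, so implicit differentiation gives `Aₓ = (1−q)uv/(v − qu)`,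
and a direct computation gives `dB/da = (1−q)(v + qu)/(v − qu) · (B + (u − v)/(v − qu))`.
Since `1 + q + 2qxAₓ = (1−q)(v + qu)/(v − qu)` and `xAₓ = (u − v)/(v − qu)`, the chain
rule `∂ₓB = dB/da · Aₓ` is exactly the ODE.
-/

open Real Filter Topology

theorem HasDerivAt.mul_deriv_eq_one_of_leftInverse {𝕜 : Type*} [NontriviallyNormedField 𝕜]
    {g A : 𝕜 → 𝕜} {g' x : 𝕜} (hg : HasDerivAt g g' (A x))
    (hA : DifferentiableAt 𝕜 A x)
    (hinv : g ∘ A =ᶠ[𝓝 x] id) : g' * _root_.deriv A x = 1 :=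
  ((hg.comp x hA.hasDerivAt).congr_of_eventuallyEq hinv.symm).unique (hasDerivAt_id x)

namespace PathLength

noncomputable def xOfA (q a : ℝ) : ℝ := (exp (-q * a) - exp (-a)) / (1 - q)

noncomputable def BofA (q a : ℝ) : ℝ :=
  (exp (2 * q * a) + ((1 - q) ^ 2 * a - q - 1) * exp ((1 + q) * a) + q * exp (2 * a))
    / (exp (q * a) - q * exp a) ^ 2

theorem Bfun_eq_comp (q : ℝ) (A : ℝ → ℝ) : Bfun q A = BofA q ∘ A := rfl

theorem hasDerivAt_xOfA (q a : ℝ) :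
    HasDerivAt (xOfA q) ((exp (-a) - q * exp (-q * a)) / (1 - q)) a := by
  have hid := hasDerivAt_id a
  have h := ((hid.const_mul (-q)).exp.sub hid.neg.exp).div_const (1 - q)
  refine h.congr_deriv ?_
  simp only [id, Pi.neg_apply]
  ring

theorem hasDerivAt_BofA {q a : ℝ} (hden : exp (q * a) - q * exp a ≠ 0) :
    HasDerivAt (BofA q)
      ((1 - q) * (exp (q * a) + q * exp a) / (exp (q * a) - q * exp a)
        * (BofA q a + (exp a - exp (q * a)) / (exp (q * a) - q * exp a))) a := by
  have hid := hasDerivAt_id a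
  have hnum := (((hid.const_mul (2 * q)).exp.add
      ((((hid.const_mul ((1 - q) ^ 2)).sub_const q).sub_const 1).mul
        (hid.const_mul (1 + q)).exp)).add ((hid.const_mul 2).exp.const_mul q))
  have hB := hnum.div (((hid.const_mul q).exp.sub (hid.exp.const_mul q)).pow 2)
    (pow_ne_zero 2 hden)
  refine hB.congr_deriv ?_
  have e1 : exp (2 * q * a) = exp (q * a) * exp (q * a) := by rw [← exp_add]; ring_nf
  have e2 : exp ((1 + q) * a) = exp a * exp (q * a) := by rw [← exp_add]; ring_nf
  have e3 : exp (2 * a) = exp a * exp a := by rw [← exp_add]; ring_nf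
  simp only [BofA, id, Pi.add_apply, Pi.sub_apply, Pi.mul_apply, Pi.pow_apply, e1, e2, e3]
  field_simp
  ring

theorem ode_of_implicit {q u v a' x B : ℝ} (hu : u ≠ 0) (hv : v ≠ 0) (hq : 1 - q ≠ 0)
    (hden : v - q * u ≠ 0) (hone : (u⁻¹ - q * v⁻¹) / (1 - q) * a' = 1)
    (hx : x = (v⁻¹ - u⁻¹) / (1 - q)) :
    (1 - q) * (v + q * u) / (v - q * u) * (B + (u - v) / (v - q * u)) * a'
        - (1 + q + 2 * q * x * a') * a' * B
      = x * (1 + q + 2 * q * x * a') * a' ^ 2 := by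
  have ha' : a' = (1 - q) * u * v / (v - q * u) := by
    rw [eq_div_iff hden]
    field_simp at hone
    linear_combination hone
  subst ha' hx
  field_simp
  ring

end PathLength

open PathLength in
theorem B_ode_general (q : ℝ) (hq1 : q < 1) (ε : ℝ)
    (A : ℝ → ℝ) (hA0 : A 0 = 0)
    (himpl : ∀ x : ℝ, |x| < ε →
      x = (Real.exp (-q * A x) - Real.exp (-(A x))) / (1 - q))
    (hdiff : ∀ x : ℝ, |x| < ε → DifferentiableAt ℝ A x) :
    (∀ x : ℝ, |x| < ε →
      deriv (Bfun q A) x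
          - (1 + q + 2 * q * x * deriv A x) * deriv A x * Bfun q A x
        = x * (1 + q + 2 * q * x * deriv A x) * (deriv A x) ^ 2) ∧
    Bfun q A 0 = 0 := by
  refine ⟨fun x hx => ?_, by simp [Bfun, hA0]⟩
  have hinv : xOfA q ∘ A =ᶠ[𝓝 x] id :=
    eventually_of_mem ((isOpen_lt continuous_abs continuous_const).mem_nhds (by exact hx))
      fun y hy => (himpl y hy).symm
  have hone := (hasDerivAt_xOfA q (A x)).mul_deriv_eq_one_of_leftInverse (hdiff x hx) hinv
  have hx' := himpl x hx
  rw [neg_mul, exp_neg, exp_neg] at hone hx'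
  have hden : exp (q * A x) - q * exp (A x) ≠ 0 := by
    intro h
    rw [show (exp (A x))⁻¹ - q * (exp (q * A x))⁻¹
        = (exp (q * A x) - q * exp (A x)) / (exp (A x) * exp (q * A x)) by field_simp, h] at hone
    simp at hone
  rw [Bfun_eq_comp, ((hasDerivAt_BofA hden).comp x (hdiff x hx).hasDerivAt).deriv]
  exact ode_of_implicit (exp_ne_zero _) (exp_ne_zero _) (by linarith) hden hone hx'

/-- If `A` is (near `0`) the solution of `x = (e^{-qA} − e^{-A})/(1−q)` with `A(0) = 0`,
then `B` satisfies the linear ODE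
`∂ₓB − (1+q+2qx Aₓ)·Aₓ·B = x(1+q+2qx Aₓ)·Aₓ²` with `B(0) = 0`. -/
theorem B_ode (q : ℝ) (hq0 : 0 < q) (hq1 : q < 1) (ε : ℝ) (hε : 0 < ε)
    (A : ℝ → ℝ) (hA0 : A 0 = 0)
    (himpl : ∀ x : ℝ, |x| < ε →
      x = (Real.exp (-q * A x) - Real.exp (-(A x))) / (1 - q))
    (hdiff : ∀ x : ℝ, |x| < ε → DifferentiableAt ℝ A x) :
    (∀ x : ℝ, |x| < ε →
      deriv (Bfun q A) x
          - (1 + q + 2 * q * x * deriv A x) * deriv A x * Bfun q A x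
        = x * (1 + q + 2 * q * x * deriv A x) * (deriv A x) ^ 2) ∧
    Bfun q A 0 = 0 :=
  B_ode_general q hq1 ε A hA0 himpl hdiff
end
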